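/- arXiv:0804.2228 — 3 statements merged into one kernel-verified Lean document; each statement's English description precedes it below -/
import Mathlib

section
/- (Projective change of variables) Let n be a positive integer, γ ≥ 0 a real number, and β a real number with β > n(γ(n-1)+1)/2. Then the substitution x_i = y_i/√(1 - ∑_j y_j^2) gives ∫_{ℝ^n} |Δ(x)|^{2γ} (1 + ∑_{i=1}^n x_i^2)^{-β} dx_1⋯dx_n = ∫_{{y ∈ ℝ^n : ∑_j y_j^2 < 1}} |Δ(y)|^{2γ} (1 - ∑_{i=1}^n y_i^2)^{β - n(γ(n-1)+1)/2 - 1} dy_1⋯dy_n. -/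
/-!
The substitution `x = (1 - |y|²)^(-1/2) • y` maps the open unit ball bijectively onto `ℝⁿ`, with
inverse `y = (1 + |x|²)^(-1/2) • x`, and `1 + |x|² = (1 - |y|²)⁻¹`. Its Jacobian matrix is
`c I + c³ y yᵀ` with `c = (1 - |y|²)^(-1/2)`, whose determinant `cⁿ (1 + c² |y|²)` equals
`(1 - |y|²)^(-n/2 - 1)` by the matrix determinant lemma. Since `Δ` is homogeneous of degree
`n(n-1)/2`, every factor of the transformed integrand is a power of `1 - |y|²` times `|Δ(y)|^(2γ)`,
and the exponents add up to the one on the right.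
-/

open MeasureTheory Real Finset

/-- The Vandermonde product `Δ(x) = ∏_{i<j} (x_i - x_j)`. -/
noncomputable def vandermonde {n : ℕ} (x : Fin n → ℝ) : ℝ :=
  ∏ i : Fin n, ∏ j ∈ Finset.Ioi i, (x i - x j)

theorem Matrix.det_one_add_vecMulVec {m α : Type*} [Fintype m] [DecidableEq m] [CommRing α]
    (u v : m → α) : (1 + Matrix.vecMulVec u v).det = 1 + v ⬝ᵥ u := by
  rw [Matrix.vecMulVec_eq (ι := Unit), Matrix.det_one_add_replicateCol_mul_replicateRow]

theorem Fin.sum_card_Ioi (n : ℕ) : ∑ i : Fin n, #(Ioi i) = n.choose 2 := by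
  simp_rw [Fin.card_Ioi]
  rw [Fin.sum_univ_eq_sum_range (fun i => n - 1 - i), Finset.sum_range_reflect (fun i => i) n,
    Finset.sum_range_id, Nat.choose_two_right]

theorem vandermonde_smul {n : ℕ} (a : ℝ) (y : Fin n → ℝ) :
    vandermonde (a • y) = a ^ n.choose 2 * vandermonde y := by
  simp only [vandermonde, Pi.smul_apply, smul_eq_mul, ← mul_sub, prod_mul_distrib, prod_const,
    prod_pow_eq_pow_sum, Fin.sum_card_Ioi]

theorem Real.rpow_neg_half_sq {t : ℝ} (ht : 0 ≤ t) : (t ^ (-(1 / 2) : ℝ)) ^ 2 = t⁻¹ := by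
  rw [← rpow_mul_natCast ht]
  norm_num [rpow_neg_one]

namespace ProjectiveChange

variable {ι : Type*} [Fintype ι]

def sumSq (y : ι → ℝ) : ℝ := ∑ i, y i ^ 2

noncomputable def radialFactor (s : ℝ) (y : ι → ℝ) : ℝ :=
  (1 + s * sumSq y) ^ (-(1 / 2) : ℝ)

/-- `radialScale (-1)` is the substitution `y ↦ y / √(1 - |y|²)` of the unit ball onto `ℝⁿ`, and
`radialScale 1` is its inverse. -/
noncomputable def radialScale (s : ℝ) (y : ι → ℝ) : ι → ℝ :=
  radialFactor s y • y

theorem sumSq_nonneg (y : ι → ℝ) : 0 ≤ sumSq y :=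
  sum_nonneg fun i _ => sq_nonneg (y i)

theorem sumSq_smul (a : ℝ) (y : ι → ℝ) : sumSq (a • y) = a ^ 2 * sumSq y := by
  simp [sumSq, mul_sum, mul_pow]

theorem one_sub_mul_sumSq_radialScale {s : ℝ} {y : ι → ℝ} (h : 0 < 1 + s * sumSq y) :
    1 - s * sumSq (radialScale s y) = (1 + s * sumSq y)⁻¹ := by
  rw [radialScale, radialFactor, sumSq_smul, rpow_neg_half_sq h.le]
  field_simp
  ring

theorem radialScale_neg_radialScale {s : ℝ} {y : ι → ℝ} (h : 0 < 1 + s * sumSq y) :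
    radialScale (-s) (radialScale s y) = y := by
  rw [radialScale, radialFactor, neg_mul, ← sub_eq_add_neg, one_sub_mul_sumSq_radialScale h,
    radialScale, radialFactor, smul_smul, inv_rpow h.le, ← rpow_neg h.le, ← rpow_add h]
  norm_num

theorem injOn_radialScale (s : ℝ) : Set.InjOn (radialScale s) {y : ι → ℝ | 0 < 1 + s * sumSq y} :=
  Set.LeftInvOn.injOn fun _ hy => radialScale_neg_radialScale hy

theorem image_radialScale (s : ℝ) :
    radialScale s '' {y : ι → ℝ | 0 < 1 + s * sumSq y} = {x | 0 < 1 - s * sumSq x} := by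
  ext x
  constructor
  · rintro ⟨y, hy, rfl⟩
    rw [Set.mem_ofPred_eq, one_sub_mul_sumSq_radialScale hy]
    exact inv_pos.2 hy
  · intro hx
    have hx' : 0 < 1 + -s * sumSq x := by rwa [neg_mul, ← sub_eq_add_neg]
    refine ⟨radialScale (-s) x, ?_, by simpa using radialScale_neg_radialScale hx'⟩
    have hback := one_sub_mul_sumSq_radialScale hx'
    rw [neg_mul, sub_neg_eq_add] at hback
    rw [Set.mem_ofPred_eq, hback]
    exact inv_pos.2 hx'

theorem hasFDerivAt_sumSq (y : ι → ℝ) :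
    HasFDerivAt sumSq (∑ i, (2 * y i) • (ContinuousLinearMap.proj i : (ι → ℝ) →L[ℝ] ℝ)) y := by
  refine HasFDerivAt.fun_sum fun i _ => ?_
  simpa using (hasFDerivAt_apply (𝕜 := ℝ) (F' := fun _ => ℝ) i y).pow 2

variable [DecidableEq ι]

noncomputable def radialScaleJacobian (s : ℝ) (y : ι → ℝ) : Matrix ι ι ℝ :=
  radialFactor s y • 1 + (-s * radialFactor s y ^ 3) • Matrix.vecMulVec y y

theorem hasFDerivAt_radialScale {s : ℝ} {y : ι → ℝ} (h : 0 < 1 + s * sumSq y) :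
    HasFDerivAt (radialScale s)
      (Matrix.toLin' (radialScaleJacobian s y)).toContinuousLinearMap y := by
  have hc : HasFDerivAt (radialFactor s) ((-(1 / 2) * (1 + s * sumSq y) ^ (-(1 / 2) - 1 : ℝ)) •
      s • ∑ i, (2 * y i) • (ContinuousLinearMap.proj i : (ι → ℝ) →L[ℝ] ℝ)) y := by
    exact (hasDerivAt_rpow_const (p := -(1 / 2)) (Or.inl h.ne')).comp_hasFDerivAt y
      (((hasFDerivAt_sumSq y).const_smul s).const_add 1)
  have hc3 : (1 + s * sumSq y) ^ (-(1 / 2) - 1 : ℝ) = radialFactor s y ^ 3 := by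
    rw [radialFactor, ← rpow_mul_natCast h.le]
    norm_num
  rw [hc3] at hc
  refine (hc.smul (hasFDerivAt_id y)).congr_fderiv ?_
  ext v i
  simp only [one_div, neg_mul, id_eq, add_apply, smul_apply, ContinuousLinearMap.id_apply,
    ContinuousLinearMap.smulRight_apply, _root_.sum_apply, ContinuousLinearMap.proj_apply,
    smul_eq_mul, mul_sum, sum_neg_distrib, neg_smul, Pi.add_apply, Pi.smul_apply, Pi.neg_apply,
    sum_mul, radialScaleJacobian, map_add, map_smul, Matrix.toLin'_one, map_neg,
    LinearMap.coe_toContinuousLinearMap', LinearMap.id_coe, neg_apply, Matrix.toLin'_apply,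
    Matrix.mulVec, dotProduct, Matrix.vecMulVec_apply, add_right_inj, neg_inj]
  exact sum_congr rfl fun j _ => by ring

theorem det_radialScaleJacobian {s : ℝ} {y : ι → ℝ} (h : 0 < 1 + s * sumSq y) :
    (radialScaleJacobian s y).det = (1 + s * sumSq y) ^ (-(Fintype.card ι : ℝ) / 2 - 1) := by
  have hc2 : radialFactor s y ^ 2 = (1 + s * sumSq y)⁻¹ := rpow_neg_half_sq h.le
  have hJ : radialScaleJacobian s y =
      radialFactor s y • (1 + Matrix.vecMulVec ((-s * radialFactor s y ^ 2) • y) y) := by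
    ext i j
    simp only [radialScaleJacobian, neg_mul, neg_smul, Matrix.add_apply, Matrix.smul_apply,
      smul_eq_mul, Matrix.neg_apply, Matrix.vecMulVec_apply, Matrix.neg_vecMulVec,
      Matrix.smul_vecMulVec]
    ring
  have hdot : y ⬝ᵥ (-s * radialFactor s y ^ 2) • y = -s * radialFactor s y ^ 2 * sumSq y := by
    simp only [dotProduct, sumSq, Pi.smul_apply, smul_eq_mul, mul_sum]
    exact sum_congr rfl fun _ _ => by ring
  rw [hJ, Matrix.det_smul, Matrix.det_one_add_vecMulVec, hdot, hc2, radialFactor,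
    ← rpow_mul_natCast h.le]
  have hfactor : 1 + -s * (1 + s * sumSq y)⁻¹ * sumSq y = (1 + s * sumSq y)⁻¹ := by
    field_simp
    ring
  rw [hfactor, ← div_eq_mul_inv, ← rpow_sub_one h.ne']
  ring_nf

theorem abs_det_mul_integrand_radialScale {n : ℕ} (γ β : ℝ) {y : Fin n → ℝ}
    (hy : sumSq y < 1) :
    |(radialScaleJacobian (-1) y).det| * (|vandermonde (radialScale (-1) y)| ^ (2 * γ) *
        (1 + sumSq (radialScale (-1) y)) ^ (-β)) =
      |vandermonde y| ^ (2 * γ) * (1 - sumSq y) ^ (β - n * (γ * (n - 1) + 1) / 2 - 1) := by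
  have ht : 0 < 1 - sumSq y := by linarith
  have hy' : 0 < 1 + -1 * sumSq y := by linarith
  have hone : ∀ q : ℝ, 1 + -1 * q = 1 - q := fun q => by ring
  have hsq : 1 + sumSq (radialScale (-1) y) = (1 - sumSq y)⁻¹ := by
    simpa [sub_eq_add_neg] using one_sub_mul_sumSq_radialScale hy'
  have hc : 0 < radialFactor (-1) y := rpow_pos_of_pos hy' _
  rw [det_radialScaleJacobian hy', hsq, radialScale, vandermonde_smul, abs_mul, abs_pow,
    abs_of_pos hc, mul_rpow (pow_nonneg hc.le _) (abs_nonneg _), radialFactor, hone,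
    abs_of_pos (rpow_pos_of_pos ht _), ← rpow_mul_natCast ht.le, ← rpow_mul ht.le,
    inv_rpow ht.le, ← rpow_neg ht.le, Fintype.card_fin]
  have hexp : β - n * (γ * (n - 1) + 1) / 2 - 1 =
      (-(n : ℝ) / 2 - 1) + -(1 / 2) * (n.choose 2 : ℕ) * (2 * γ) + -(-β) := by
    rw [Nat.cast_choose_two]
    ring
  rw [hexp, rpow_add ht, rpow_add ht]
  ring

end ProjectiveChange

open ProjectiveChange in
theorem projective_change_of_variables_general (n : ℕ) (γ : ℝ) (β : ℝ) :
    (∫ x : Fin n → ℝ,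
        |vandermonde x| ^ (2 * γ) * (1 + ∑ i : Fin n, (x i) ^ 2) ^ (-β)) =
      ∫ y in {y : Fin n → ℝ | ∑ j : Fin n, (y j) ^ 2 < 1},
        |vandermonde y| ^ (2 * γ) *
          (1 - ∑ i : Fin n, (y i) ^ 2) ^ (β - (n : ℝ) * (γ * ((n : ℝ) - 1) + 1) / 2 - 1) := by
  have hball : {y : Fin n → ℝ | ∑ j : Fin n, (y j) ^ 2 < 1} = {y | 0 < 1 + -1 * sumSq y} := by
    ext y
    simp only [Set.mem_ofPred_eq, sumSq]
    constructor <;> intro h <;> linarith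
  have hspace : {x : Fin n → ℝ | 0 < 1 - -1 * sumSq x} = Set.univ :=
    Set.eq_univ_of_forall fun x => by
      simp only [Set.mem_ofPred_eq]
      linarith [sumSq_nonneg x]
  have hS : MeasurableSet {y : Fin n → ℝ | 0 < 1 + -1 * sumSq y} :=
    measurableSet_lt measurable_const (by unfold sumSq; fun_prop)
  rw [← setIntegral_univ, ← hspace, ← image_radialScale,
    integral_image_eq_integral_abs_det_fderiv_smul volume hS
      (fun y hy => (hasFDerivAt_radialScale hy).hasFDerivWithinAt) (injOn_radialScale _), hball]
  refine setIntegral_congr_fun hS fun y hy => ?_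
  have hy' : sumSq y < 1 := by simp only [Set.mem_ofPred_eq] at hy; linarith
  simpa [sumSq] using abs_det_mul_integrand_radialScale γ β hy'

/-- **Projective change of variables**: the Cauchy-type Selberg integral over `ℝ^n`
equals the corresponding integral over the open unit ball. -/
theorem projective_change_of_variables (n : ℕ) (hn : 0 < n) (γ : ℝ) (hγ : 0 ≤ γ)
    (β : ℝ) (hβ : (n : ℝ) * (γ * ((n : ℝ) - 1) + 1) / 2 < β) :
    (∫ x : Fin n → ℝ,
        |vandermonde x| ^ (2 * γ) * (1 + ∑ i : Fin n, (x i) ^ 2) ^ (-β)) =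
      ∫ y in {y : Fin n → ℝ | ∑ j : Fin n, (y j) ^ 2 < 1},
        |vandermonde y| ^ (2 * γ) *
          (1 - ∑ i : Fin n, (y i) ^ 2) ^ (β - (n : ℝ) * (γ * ((n : ℝ) - 1) + 1) / 2 - 1) :=
  projective_change_of_variables_general n γ β
end

section
/- (Proposition 1: Vandermonde integral over the ball of radius R) For every positive integer n and every R > 0, ∫_{{x ∈ ℝ^n : ∑_i x_i^2 ≤ R²}} Δ(x)^2 dx_1⋯dx_n = R^{n²} · [1/Γ(n²/2 + 1)] · (2π)^{n/2} · 2^{-n²/2} · ∏_{j=1}^n Γ(1+j). -/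
open MeasureTheory Real Finset

/-!
Writing `Δ(x)` as the determinant `det [He_j(x_i)]` of the monic probabilists' Hermite
polynomials and expanding the square over pairs of permutations, orthogonality of the `He_j`
for the weight `e^{-t²/2}` leaves only the diagonal terms; this is Mehta's integral
`∫ Δ(x)² ∏ e^{-x_i²/2} dx = (2π)^{n/2} ∏_{j=1}^n j!`.

On the other hand `Δ²` is homogeneous of degree `n(n-1)`, so `I(t) := ∫_{|x| ≤ t} Δ²`
equals `t^{n²} I(1)`. Writing `e^{-|x|²/2} = ∫_{|x|}^∞ t e^{-t²/2} dt` and exchanging the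
integrals gives `∫ Δ(x)² e^{-|x|²/2} dx = ∫_0^∞ t e^{-t²/2} I(t) dt = 2^{n²/2} Γ(n²/2 + 1) I(1)`.
Comparing the two evaluations determines `I(1)`, hence `I(R)`.
-/

open Filter Metric Module Set Polynomial Topology
open scoped ENNReal Nat Pointwise

section Radial

variable {E : Type*} [NormedAddCommGroup E] [MeasurableSpace E] [BorelSpace E]

theorem setIntegral_smul_set_of_homogeneous [NormedSpace ℝ E] [FiniteDimensional ℝ E]
    (μ : Measure E) [μ.IsAddHaarMeasure] {f : E → ℝ} {d : ℕ}
    (hf : ∀ t : ℝ, 0 < t → ∀ x, f (t • x) = t ^ d * f x) (s : Set E) {R : ℝ} (hR : 0 < R) :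
    ∫ x in R • s, f x ∂μ = R ^ (finrank ℝ E + d) * ∫ x in s, f x ∂μ := by
  have h := Measure.setIntegral_comp_smul_of_pos μ f s hR
  simp_rw [hf R hR, integral_const_mul, smul_eq_mul] at h
  rw [pow_add, mul_assoc, h, ← mul_assoc, mul_inv_cancel₀ (pow_pos hR _).ne', one_mul]

theorem integrable_pow_mul_exp_neg_sq_div_two (k : ℕ) :
    Integrable fun x : ℝ => x ^ k * exp (-(x ^ 2 / 2)) := by
  simpa [neg_div, div_eq_inv_mul] using integrable_rpow_mul_exp_neg_mul_sq (b := 1 / 2)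
    (by norm_num) (s := k) (neg_one_lt_zero.trans_le k.cast_nonneg)

theorem hasDerivAt_exp_neg_sq_div_two (x : ℝ) :
    HasDerivAt (fun x => exp (-(x ^ 2 / 2))) (-x * exp (-(x ^ 2 / 2))) x := by
  have h : HasDerivAt (fun x : ℝ => -(x ^ 2 / 2)) (-x) x := by
    simpa using ((hasDerivAt_pow 2 x).div_const 2).fun_neg
  exact h.exp.congr_deriv (by ring)

theorem integral_Ioi_mul_exp_neg_sq_div_two (a : ℝ) :
    ∫ t in Ioi a, t * exp (-(t ^ 2 / 2)) = exp (-(a ^ 2 / 2)) := by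
  have hderiv (t : ℝ) : HasDerivAt (fun t => -exp (-(t ^ 2 / 2))) (t * exp (-(t ^ 2 / 2))) t :=
    (hasDerivAt_exp_neg_sq_div_two t).fun_neg.congr_deriv (by ring)
  have hlim : Tendsto (fun t : ℝ => -exp (-(t ^ 2 / 2))) atTop (𝓝 0) := by
    have : Tendsto (fun t : ℝ => -(t ^ 2 / 2)) atTop atBot :=
      tendsto_neg_atTop_atBot.comp ((tendsto_pow_atTop two_ne_zero).atTop_div_const two_pos)
    simpa using (tendsto_exp_atBot.comp this).neg
  have hint : Integrable fun t : ℝ => t * exp (-(t ^ 2 / 2)) := by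
    simpa using integrable_pow_mul_exp_neg_sq_div_two 1
  simpa using integral_Ioi_of_hasDerivAt_of_tendsto' (fun t _ => hderiv t) hint.integrableOn hlim

theorem integral_Ioi_pow_mul_exp_neg_sq_div_two (k : ℕ) :
    ∫ t in Ioi 0, t ^ (k + 1) * exp (-(t ^ 2 / 2)) = 2 ^ ((k : ℝ) / 2) * Gamma (k / 2 + 1) := by
  have h := integral_rpow_mul_exp_neg_mul_rpow (p := 2) (q := k + 1) (b := 1 / 2) two_pos
    (neg_one_lt_zero.trans_le (by positivity)) (by norm_num)
  have hq : ((k : ℝ) + 1 + 1) / 2 = k / 2 + 1 := by ring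
  calc ∫ t in Ioi 0, t ^ (k + 1) * exp (-(t ^ 2 / 2))
      = ∫ t in Ioi 0, t ^ ((k : ℝ) + 1) * exp (-(1 / 2) * t ^ (2 : ℝ)) :=
        setIntegral_congr_fun measurableSet_Ioi fun t _ => by
          rw [← Nat.cast_add_one, Real.rpow_natCast, Real.rpow_two]
          ring_nf
    _ = 2 ^ ((k : ℝ) / 2) * Gamma (k / 2 + 1) := by
      rw [h, one_div, inv_rpow zero_le_two, ← rpow_neg zero_le_two, neg_div, neg_neg, hq,
        rpow_add two_pos, Real.rpow_one]
      field_simp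

theorem lintegral_mul_exp_neg_norm_sq_div_two (μ : Measure E) [SFinite μ] {F : E → ℝ≥0∞}
    (hF : Measurable F) :
    ∫⁻ x, F x * ENNReal.ofReal (exp (-(‖x‖ ^ 2 / 2))) ∂μ =
      ∫⁻ t in Ioi 0, ENNReal.ofReal (t * exp (-(t ^ 2 / 2))) * ∫⁻ x in closedBall 0 t, F x ∂μ := by
  set g : ℝ → ℝ≥0∞ := fun t => ENNReal.ofReal (t * exp (-(t ^ 2 / 2)))
  have hg : Measurable g := ENNReal.measurable_ofReal.comp (by fun_prop)
  set K : Set (E × ℝ) := {p | ‖p.1‖ ≤ p.2}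
  have hK : MeasurableSet K := (isClosed_le continuous_fst.norm continuous_snd).measurableSet
  have hK_fst (x : E) (t : ℝ) :
      K.indicator (fun p => F p.1 * g p.2) (x, t) = F x * (Ici ‖x‖).indicator g t := by
    by_cases h : ‖x‖ ≤ t <;> simp [K, h]
  have hK_snd (x : E) (t : ℝ) :
      K.indicator (fun p => F p.1 * g p.2) (x, t) = g t * (closedBall 0 t).indicator F x := by
    by_cases h : ‖x‖ ≤ t <;> simp [K, h, mul_comm]
  have htail (x : E) : ∫⁻ t, (Ici ‖x‖).indicator g t = ENNReal.ofReal (exp (-(‖x‖ ^ 2 / 2))) := by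
    have hint : Integrable fun t : ℝ => t * exp (-(t ^ 2 / 2)) := by
      simpa using integrable_pow_mul_exp_neg_sq_div_two 1
    rw [lintegral_indicator measurableSet_Ici, ← setLIntegral_congr Ioi_ae_eq_Ici,
      ← integral_Ioi_mul_exp_neg_sq_div_two, ofReal_integral_eq_lintegral_ofReal hint.integrableOn]
    filter_upwards [self_mem_ae_restrict measurableSet_Ioi] with t ht
    exact mul_nonneg ((norm_nonneg x).trans ht.le) (exp_pos _).le
  calc ∫⁻ x, F x * ENNReal.ofReal (exp (-(‖x‖ ^ 2 / 2))) ∂μ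
      = ∫⁻ x, (∫⁻ t, K.indicator (fun p => F p.1 * g p.2) (x, t)) ∂μ := by
        refine lintegral_congr fun x => ?_
        simp_rw [hK_fst, lintegral_const_mul _ (hg.indicator measurableSet_Ici), htail]
    _ = ∫⁻ t, ∫⁻ x, K.indicator (fun p => F p.1 * g p.2) (x, t) ∂μ := by
        refine lintegral_lintegral_swap ?_
        exact (((hF.comp measurable_fst).mul (hg.comp measurable_snd)).indicator hK).aemeasurable
    _ = ∫⁻ t, g t * ∫⁻ x in closedBall 0 t, F x ∂μ := by
        refine lintegral_congr fun t => ?_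
        simp_rw [hK_snd]
        rw [lintegral_const_mul' _ _ ENNReal.ofReal_ne_top,
          lintegral_indicator measurableSet_closedBall]
    _ = ∫⁻ t in Ioi 0, g t * ∫⁻ x in closedBall 0 t, F x ∂μ := by
        refine (setLIntegral_eq_of_support_subset fun t ht => ?_).symm
        contrapose! ht
        simp [g, ENNReal.ofReal_eq_zero.2
          (mul_nonpos_of_nonpos_of_nonneg (not_lt.1 ht) (exp_pos _).le)]

theorem integral_mul_exp_neg_norm_sq_div_two_of_homogeneous [NormedSpace ℝ E]
    [FiniteDimensional ℝ E] (μ : Measure E) [μ.IsAddHaarMeasure] {f : E → ℝ} {d : ℕ}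
    (hf_cont : Continuous f) (hf_nonneg : 0 ≤ f)
    (hf : ∀ t : ℝ, 0 < t → ∀ x, f (t • x) = t ^ d * f x) :
    ∫ x, f x * exp (-(‖x‖ ^ 2 / 2)) ∂μ = (∫ x in closedBall 0 1, f x ∂μ) *
      (2 ^ (((finrank ℝ E + d : ℕ) : ℝ) / 2) * Gamma ((finrank ℝ E + d : ℕ) / 2 + 1)) := by
  set N := finrank ℝ E + d
  set B := ∫ x in closedBall 0 1, f x ∂μ
  have hB : 0 ≤ B := setIntegral_nonneg measurableSet_closedBall fun x _ => hf_nonneg x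
  have hball {t : ℝ} (ht : 0 < t) :
      ∫⁻ x in closedBall 0 t, ENNReal.ofReal (f x) ∂μ = ENNReal.ofReal (t ^ N * B) := by
    rw [← ofReal_integral_eq_lintegral_ofReal
        (hf_cont.continuousOn.integrableOn_compact (isCompact_closedBall 0 t))
        (ae_of_all _ hf_nonneg),
      ← smul_unitClosedBall_of_nonneg ht.le, setIntegral_smul_set_of_homogeneous μ hf _ ht]
  have hmoment : IntegrableOn (fun t : ℝ => B * (t ^ (N + 1) * exp (-(t ^ 2 / 2)))) (Ioi 0) :=
    ((integrable_pow_mul_exp_neg_sq_div_two (N + 1)).const_mul B).integrableOn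
  rw [integral_eq_lintegral_of_nonneg_ae
      (ae_of_all _ fun x => mul_nonneg (hf_nonneg x) (exp_pos _).le)
      ((hf_cont.mul (by fun_prop)).aestronglyMeasurable)]
  simp_rw [ENNReal.ofReal_mul (hf_nonneg _)]
  have hslice : EqOn (fun t => ENNReal.ofReal (t * exp (-(t ^ 2 / 2))) *
      ∫⁻ x in closedBall 0 t, ENNReal.ofReal (f x) ∂μ)
      (fun t => ENNReal.ofReal (B * (t ^ (N + 1) * exp (-(t ^ 2 / 2))))) (Ioi 0) := fun t ht => by
    dsimp only
    rw [hball ht, ← ENNReal.ofReal_mul (mul_nonneg (le_of_lt ht) (exp_pos _).le)]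
    ring_nf
  rw [lintegral_mul_exp_neg_norm_sq_div_two μ hf_cont.measurable.ennreal_ofReal,
    setLIntegral_congr_fun measurableSet_Ioi hslice,
    ← ofReal_integral_eq_lintegral_ofReal hmoment
      (ae_restrict_of_forall_mem measurableSet_Ioi fun t (ht : 0 < t) => by positivity),
    ENNReal.toReal_ofReal, integral_const_mul, integral_Ioi_pow_mul_exp_neg_sq_div_two]
  exact setIntegral_nonneg measurableSet_Ioi fun t (ht : 0 < t) => by positivity

end Radial

section Orthogonal

variable {α : Type*} [MeasurableSpace α] (μ : Measure α) [SigmaFinite μ]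

theorem integral_prod_perm_of_orthogonal {n : ℕ} {f : Fin n → α → ℝ} {w : α → ℝ}
    {c : Fin n → ℝ} (horth : ∀ j k, ∫ a, f j a * f k a * w a ∂μ = if j = k then c j else 0)
    (σ τ : Equiv.Perm (Fin n)) :
    ∫ x, ∏ i, f (σ i) (x i) * f (τ i) (x i) * w (x i) ∂Measure.pi (fun _ => μ) =
      if σ = τ then ∏ j, c j else 0 := by
  rw [integral_fintype_prod_eq_prod (f := fun i a => f (σ i) a * f (τ i) a * w a)]
  simp_rw [horth, Finset.prod_ite_zero, Finset.mem_univ, true_imp_iff, ← Equiv.ext_iff]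
  split_ifs with h
  · exact Equiv.prod_comp σ c
  · rfl

theorem integral_det_sq_mul_prod_of_orthogonal {n : ℕ} {f : Fin n → α → ℝ} {w : α → ℝ}
    {c : Fin n → ℝ} (hint : ∀ j k, Integrable (fun a => f j a * f k a * w a) μ)
    (horth : ∀ j k, ∫ a, f j a * f k a * w a ∂μ = if j = k then c j else 0) :
    ∫ x, (Matrix.of fun i j => f j (x i)).det ^ 2 * ∏ i, w (x i) ∂Measure.pi (fun _ => μ) =
      n ! * ∏ j, c j := by
  have hexpand (x : Fin n → α) : (Matrix.of fun i j => f j (x i)).det ^ 2 * ∏ i, w (x i) =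
      ∑ σ : Equiv.Perm (Fin n), ∑ τ : Equiv.Perm (Fin n),
        (Equiv.Perm.sign σ : ℝ) * (Equiv.Perm.sign τ : ℝ) *
          ∏ i, f (σ i) (x i) * f (τ i) (x i) * w (x i) := by
    rw [← Matrix.det_transpose, Matrix.det_apply]
    simp_rw [Units.smul_def, zsmul_eq_mul, Matrix.transpose_apply,
      Matrix.of_apply, sq, sum_mul_sum, sum_mul, prod_mul_distrib]
    refine sum_congr rfl fun σ _ => sum_congr rfl fun τ _ => by ring
  have hint_term (σ τ : Equiv.Perm (Fin n)) :
      Integrable (fun x => ∏ i, f (σ i) (x i) * f (τ i) (x i) * w (x i))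
        (Measure.pi fun _ => μ) :=
    Integrable.fintype_prod (f := fun i a => f (σ i) a * f (τ i) a * w a) fun i => hint _ _
  simp_rw [hexpand]
  rw [integral_finsetSum _ fun σ _ => integrable_finsetSum _ fun τ _ =>
    (hint_term σ τ).const_mul _]
  simp_rw [integral_finsetSum _ fun τ _ => (hint_term _ τ).const_mul _, integral_const_mul,
    integral_prod_perm_of_orthogonal μ horth, mul_ite, mul_zero, sum_ite_eq, Finset.mem_univ,
    if_true]
  simp [← Int.cast_mul, ← Units.val_mul, Fintype.card_perm]

end Orthogonal

namespace Polynomial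

theorem iterate_derivative_natDegree {R : Type*} [CommSemiring R] (p : R[X]) :
    derivative^[p.natDegree] p = C ((p.natDegree ! : R) * p.leadingCoeff) := by
  ext m
  rw [coeff_iterate_derivative, coeff_C]
  rcases m with _ | m
  · rw [zero_add, Nat.descFactorial_self, nsmul_eq_mul, if_pos rfl, leadingCoeff]
  · rw [coeff_eq_zero_of_natDegree_lt (by omega), smul_zero, if_neg m.succ_ne_zero]

theorem integrable_eval_mul_exp_neg_sq_div_two (P : ℝ[X]) :
    Integrable fun x : ℝ => P.eval x * exp (-(x ^ 2 / 2)) := by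
  simp_rw [eval_eq_sum_range, sum_mul, mul_assoc]
  exact integrable_finsetSum _ fun k _ => (integrable_pow_mul_exp_neg_sq_div_two k).const_mul _

theorem aeval_hermite_eq_eval_map (k : ℕ) (x : ℝ) :
    aeval x (hermite k) = ((hermite k).map (algebraMap ℤ ℝ)).eval x := by
  rw [aeval_def, eval₂_eq_eval_map]

theorem integrable_eval_mul_hermite_mul_exp_neg_sq_div_two (P : ℝ[X]) (k : ℕ) :
    Integrable fun x : ℝ => P.eval x * aeval x (hermite k) * exp (-(x ^ 2 / 2)) := by
  simpa [aeval_hermite_eq_eval_map] using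
    integrable_eval_mul_exp_neg_sq_div_two (P * (hermite k).map (algebraMap ℤ ℝ))

theorem hasDerivAt_hermite_mul_exp_neg_sq_div_two (k : ℕ) (x : ℝ) :
    HasDerivAt (fun x => aeval x (hermite k) * exp (-(x ^ 2 / 2)))
      (-(aeval x (hermite (k + 1)) * exp (-(x ^ 2 / 2)))) x := by
  refine ((hermite k).hasDerivAt_aeval x |>.mul (hasDerivAt_exp_neg_sq_div_two x)).congr_deriv ?_
  rw [hermite_succ, map_sub, map_mul, aeval_X]
  ring

theorem integral_eval_mul_hermite_mul_exp_neg_sq_div_two (P : ℝ[X]) (k : ℕ) :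
    ∫ x, P.eval x * aeval x (hermite k) * exp (-(x ^ 2 / 2)) =
      ∫ x, (derivative^[k] P).eval x * exp (-(x ^ 2 / 2)) := by
  induction k generalizing P with
  | zero => simp
  | succ k ih =>
    have hparts := integral_mul_deriv_eq_deriv_mul_of_integrable
      (fun x _ => P.hasDerivAt x) (fun x _ => hasDerivAt_hermite_mul_exp_neg_sq_div_two k x)
      (by simpa only [Pi.mul_def, Pi.neg_def, mul_neg, mul_assoc] using
        (integrable_eval_mul_hermite_mul_exp_neg_sq_div_two P (k + 1)).neg)
      (by simpa only [Pi.mul_def, mul_assoc] using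
        integrable_eval_mul_hermite_mul_exp_neg_sq_div_two (derivative P) k)
      (by simpa only [Pi.mul_def, mul_assoc] using
        integrable_eval_mul_hermite_mul_exp_neg_sq_div_two P k)
    simp only [mul_neg, integral_neg, neg_inj, ← mul_assoc] at hparts
    rw [hparts, ih, Function.iterate_succ_apply]

theorem integral_hermite_mul_hermite_mul_exp_neg_sq_div_two (j k : ℕ) :
    ∫ x, aeval x (hermite j) * aeval x (hermite k) * exp (-(x ^ 2 / 2)) =
      if j = k then j ! * √(2 * π) else 0 := by
  wlog hjk : j ≤ k generalizing j k
  · simp_rw [mul_comm (aeval _ (hermite j)), this k j (by omega), eq_comm (a := k)]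
    split_ifs with h <;> simp [h]
  simp_rw [aeval_hermite_eq_eval_map j, integral_eval_mul_hermite_mul_exp_neg_sq_div_two]
  have hdeg : ((hermite j).map (algebraMap ℤ ℝ)).natDegree = j := by
    rw [(hermite_monic j).natDegree_map, natDegree_hermite]
  rcases hjk.lt_or_eq with hlt | rfl
  · rw [iterate_derivative_eq_zero (hdeg.trans_lt hlt), if_neg hlt.ne]
    simp
  · have hlead : ((hermite j).map (algebraMap ℤ ℝ)).leadingCoeff = 1 :=
      ((hermite_monic j).map _).leadingCoeff
    have := iterate_derivative_natDegree ((hermite j).map (algebraMap ℤ ℝ))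
    rw [hdeg, hlead, mul_one] at this
    have hgauss : ∫ x : ℝ, exp (-(x ^ 2 / 2)) = √(2 * π) := by
      convert integral_gaussian (1 / 2) using 3 with x
      · ring_nf
      · ring
    simp only [this, eval_C, integral_const_mul, if_true, hgauss]

end Polynomial

section Vandermonde

variable {n : ℕ}

theorem vandermonde_sq_eq_det_hermite_sq (x : Fin n → ℝ) :
    vandermonde x ^ 2 = (Matrix.of fun i j : Fin n => aeval (x i) (hermite j)).det ^ 2 := by
  have hdet := Matrix.det_eval_matrixOfPolynomials_eq_det_vandermonde x
    (fun j => (hermite j).map (algebraMap ℤ ℝ))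
    (fun j => by rw [(hermite_monic j).natDegree_map, natDegree_hermite])
    (fun j => (hermite_monic j).map _)
  simp_rw [← aeval_hermite_eq_eval_map] at hdet
  rw [← hdet, Matrix.det_vandermonde, vandermonde, ← Finset.prod_pow, ← Finset.prod_pow]
  refine prod_congr rfl fun i _ => ?_
  rw [← Finset.prod_pow, ← Finset.prod_pow]
  exact prod_congr rfl fun j _ => by ring

theorem integral_vandermonde_sq_mul_exp_neg_sq_div_two :
    ∫ x : Fin n → ℝ, vandermonde x ^ 2 * ∏ i, exp (-(x i ^ 2 / 2)) =
      (2 * π) ^ ((n : ℝ) / 2) * ∏ j ∈ Icc 1 n, Gamma (1 + j) := by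
  simp_rw [vandermonde_sq_eq_det_hermite_sq, volume_pi]
  rw [integral_det_sq_mul_prod_of_orthogonal volume (f := fun j a => aeval a (hermite (j : ℕ)))
    (w := fun a => exp (-(a ^ 2 / 2))) (c := fun j => (j : ℕ)! * √(2 * π))
    (fun j k => by simpa only [← aeval_hermite_eq_eval_map] using
      integrable_eval_mul_hermite_mul_exp_neg_sq_div_two ((hermite j).map (algebraMap ℤ ℝ)) k)
    (fun j k => by simp_rw [integral_hermite_mul_hermite_mul_exp_neg_sq_div_two, Fin.val_inj])]
  have hfact : ∏ j ∈ Icc 1 n, j ! = n ! * ∏ j ∈ range n, j ! := by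
    induction n with
    | zero => rfl
    | succ m ih =>
      rw [prod_Icc_succ_top (by omega), ih, prod_range_succ]
      ring
  have hsqrt : √(2 * π) ^ n = (2 * π) ^ ((n : ℝ) / 2) := by
    rw [sqrt_eq_rpow, ← rpow_natCast, ← rpow_mul (by positivity), one_div_mul_eq_div]
  simp_rw [prod_mul_distrib, prod_const, card_univ, Fintype.card_fin, hsqrt, add_comm (1 : ℝ),
    Gamma_nat_eq_factorial, Fin.prod_univ_eq_prod_range (fun j => (j ! : ℝ)), ← Nat.cast_prod,
    hfact]
  push_cast
  ring

theorem add_two_mul_sum_card_Ioi : n + 2 * ∑ i : Fin n, #(Ioi i) = n ^ 2 := by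
  have h : ∑ i : Fin n, #(Ioi i) = ∑ i ∈ range n, i := by
    simp_rw [Fin.card_Ioi]
    rw [Fin.sum_univ_eq_sum_range (fun i => n - 1 - i), ← sum_range_reflect]
    exact sum_congr rfl fun i hi => by have := mem_range.1 hi; omega
  rw [h, mul_comm, sum_range_id_mul_two]
  rcases n with _ | m
  · rfl
  · rw [Nat.add_sub_cancel]
    ring

theorem vandermonde_smul_s6 (t : ℝ) (x : Fin n → ℝ) :
    vandermonde (t • x) = t ^ (∑ i : Fin n, #(Ioi i)) * vandermonde x := by
  simp only [vandermonde]
  rw [← prod_pow_eq_pow_sum, ← prod_mul_distrib]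
  refine prod_congr rfl fun i _ => ?_
  rw [← prod_const, ← prod_mul_distrib]
  exact prod_congr rfl fun j _ => by simp only [Pi.smul_apply, smul_eq_mul, mul_sub]

theorem continuous_vandermonde : Continuous (vandermonde (n := n)) := by
  unfold vandermonde
  fun_prop

end Vandermonde

theorem vandermonde_integral_ball_general (n : ℕ) (R : ℝ) (hR : 0 < R) :
    (∫ x in {x : Fin n → ℝ | ∑ i : Fin n, (x i) ^ 2 ≤ R ^ 2}, (vandermonde x) ^ 2) =
      R ^ (n ^ 2) * (1 / Real.Gamma ((n : ℝ) ^ 2 / 2 + 1)) * (2 * π) ^ ((n : ℝ) / 2) *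
        2 ^ (-((n : ℝ) ^ 2) / 2) * ∏ j ∈ Finset.Icc 1 n, Real.Gamma (1 + j) := by
  -- `Fin n → ℝ` carries the sup norm; the Euclidean ball lives in `EuclideanSpace`.
  set V : EuclideanSpace ℝ (Fin n) → ℝ := fun y => vandermonde (WithLp.ofLp y) ^ 2
  have hV (t : ℝ) (_ : 0 < t) (y : EuclideanSpace ℝ (Fin n)) :
      V (t • y) = t ^ (2 * ∑ i : Fin n, #(Ioi i)) * V y := by
    simp only [V, WithLp.ofLp_smul, vandermonde_smul_s6, mul_pow, pow_mul']
  have hN : finrank ℝ (EuclideanSpace ℝ (Fin n)) + 2 * ∑ i : Fin n, #(Ioi i) = n ^ 2 := by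
    rw [finrank_euclideanSpace_fin, add_two_mul_sum_card_Ioi]
  have hball : ∫ x in {x : Fin n → ℝ | ∑ i, x i ^ 2 ≤ R ^ 2}, vandermonde x ^ 2 =
      ∫ y in closedBall 0 R, V y := by
    rw [← (PiLp.volume_preserving_toLp (Fin n)).setIntegral_preimage_emb
      (MeasurableEquiv.toLp 2 _).measurableEmbedding, EuclideanSpace.closedBall_zero_eq _ hR.le]
    rfl
  have hgauss : ∫ y, V y * exp (-(‖y‖ ^ 2 / 2)) =
      ∫ x : Fin n → ℝ, vandermonde x ^ 2 * ∏ i, exp (-(x i ^ 2 / 2)) := by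
    rw [← (PiLp.volume_preserving_toLp (Fin n)).integral_comp
      (MeasurableEquiv.toLp 2 _).measurableEmbedding]
    simp [V, EuclideanSpace.real_norm_sq_eq, ← exp_sum, sum_div]
  have hmehta := integral_mul_exp_neg_norm_sq_div_two_of_homogeneous volume (f := V)
    ((continuous_vandermonde.comp (PiLp.continuous_ofLp 2 _)).pow 2) (fun y => sq_nonneg _) hV
  rw [hgauss, integral_vandermonde_sq_mul_exp_neg_sq_div_two, hN] at hmehta
  rw [hball, ← smul_unitClosedBall_of_nonneg hR.le,
    setIntegral_smul_set_of_homogeneous volume hV _ hR, hN]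
  push_cast at hmehta
  have hΓ : Gamma ((n : ℝ) ^ 2 / 2 + 1) ≠ 0 := (Gamma_pos_of_pos (by positivity)).ne'
  set Γ := Gamma ((n : ℝ) ^ 2 / 2 + 1)
  rw [neg_div, rpow_neg zero_le_two]
  field_simp
  linear_combination -hmehta

/-- **Proposition 1: Vandermonde integral over the ball of radius `R`.** -/
theorem vandermonde_integral_ball (n : ℕ) (hn : 0 < n) (R : ℝ) (hR : 0 < R) :
    (∫ x in {x : Fin n → ℝ | ∑ i : Fin n, (x i) ^ 2 ≤ R ^ 2}, (vandermonde x) ^ 2) =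
      R ^ (n ^ 2) * (1 / Real.Gamma ((n : ℝ) ^ 2 / 2 + 1)) * (2 * π) ^ ((n : ℝ) / 2) *
        2 ^ (-((n : ℝ) ^ 2) / 2) * ∏ j ∈ Finset.Icc 1 n, Real.Gamma (1 + j) :=
  vandermonde_integral_ball_general n R hR
end

section
/- (Concentration of the radial weight) For every real α with 0 < α < 1 and every m > 0, there exists N₀ such that for all N ≥ N₀: 1 - N^{-m} ≤ [∫_{N/√2 - N^α}^{N/√2 + N^α} e^{-r²} r^{N²-2} dr] / [∫_0^∞ e^{-r²} r^{N²-2} dr] ≤ 1. -/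
/-!
Write `f(r) = e^{-r²} r^k` with `k = N² - 2`. Its mode `ρ = √(k/2)` lies within `1` of `N/√2`,
and `u ≤ e^{u-1}` applied to `u = r/ρ` and `u = ρ/r` gives the Gaussian domination
`f(r) ≤ f(ρ) e^{-(r-ρ)²}` together with `f ≥ f(ρ) e^{-3}` on `[ρ, ρ+1]`. So the total mass is at
least `f(ρ) e^{-3}`, while the mass outside the window of half-width `t = N^α` is at most
`(N + 1) f(ρ) e^{-(t-1)²}`, and `(N + 1) e^{3-t} = o(N^{-m})` because `N` is a power of `t`.
-/

open MeasureTheory Real Set Filter Topology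

lemma pow_le_pow_mul_exp (k : ℕ) {x y : ℝ} (hx : 0 ≤ x) (hy : 0 < y) :
    x ^ k ≤ y ^ k * exp (k * (x / y - 1)) := by
  calc x ^ k = y ^ k * (x / y) ^ k := by rw [div_pow, mul_div_cancel₀ _ (by positivity)]
    _ ≤ y ^ k * exp (x / y - 1) ^ k := by
        gcongr
        linarith [add_one_le_exp (x / y - 1)]
    _ = y ^ k * exp (k * (x / y - 1)) := by rw [exp_nat_mul]

lemma setIntegral_Ioi_eq_Ioc_add_Icc_add_Ioi {f : ℝ → ℝ} {c a b : ℝ} (hf : IntegrableOn f (Ioi c))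
    (hca : c ≤ a) (hab : a ≤ b) :
    ∫ x in Ioi c, f x = (∫ x in Ioc c a, f x) + (∫ x in Icc a b, f x) + ∫ x in Ioi b, f x := by
  have hcb : Ioc c b ⊆ Ioi c := Ioc_subset_Ioi_self
  have hleft := setIntegral_union (Ioc_disjoint_Ioc_of_le le_rfl) measurableSet_Ioc
    (hf.mono_set ((Ioc_subset_Ioc_right hab).trans hcb))
    (hf.mono_set ((Ioc_subset_Ioc_left hca).trans hcb))
  have hall := setIntegral_union Ioc_disjoint_Ioi_same measurableSet_Ioi
    (hf.mono_set hcb) (hf.mono_set (Ioi_subset_Ioi (hca.trans hab)))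
  rw [Ioc_union_Ioc_eq_Ioc hca hab] at hleft
  rw [Ioc_union_Ioi_eq_Ioi (hca.trans hab)] at hall
  rw [integral_Icc_eq_integral_Ioc, hall, hleft]

lemma setIntegral_Icc_div_setIntegral_Ioi_le_one {f : ℝ → ℝ} {c a b : ℝ}
    (hf : IntegrableOn f (Ioi c)) (hf0 : ∀ x ∈ Ioi c, 0 ≤ f x) (hca : c ≤ a) :
    (∫ x in Icc a b, f x) / ∫ x in Ioi c, f x ≤ 1 := by
  refine div_le_one_of_le₀ (setIntegral_mono_set hf ?_ ?_)
    (setIntegral_nonneg measurableSet_Ioi hf0)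
  · exact (ae_restrict_iff' measurableSet_Ioi).2 (.of_forall hf0)
  · exact (Icc_subset_Ici_self.trans (Ici_subset_Ici.2 hca)).eventuallyLE.trans
      Ioi_ae_eq_Ici.symm.le

noncomputable def radialWeight (k : ℕ) (r : ℝ) : ℝ := exp (-r ^ 2) * r ^ k

section RadialWeight

variable {k : ℕ} {ρ r : ℝ}

lemma radialWeight_nonneg (hr : 0 ≤ r) : 0 ≤ radialWeight k r := by
  unfold radialWeight; positivity

lemma radialWeight_pos (hr : 0 < r) : 0 < radialWeight k r := by
  unfold radialWeight; positivity

lemma integrableOn_radialWeight_Ioi (k : ℕ) : IntegrableOn (radialWeight k) (Ioi 0) := by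
  have hk : (-1 : ℝ) < k := by linarith [k.cast_nonneg (α := ℝ)]
  refine (integrableOn_rpow_mul_exp_neg_mul_sq one_pos hk).congr_fun (fun r _ => ?_)
    measurableSet_Ioi
  simp [radialWeight, mul_comm]

lemma radialWeight_le_mul_exp_neg_sq (hρ : 0 < ρ) (hr : 0 ≤ r) (hk : (k : ℝ) = 2 * ρ ^ 2) :
    radialWeight k r ≤ radialWeight k ρ * exp (-(r - ρ) ^ 2) := by
  have hpow := pow_le_pow_mul_exp k hr hρ
  rw [hk, show 2 * ρ ^ 2 * (r / ρ - 1) = 2 * ρ * (r - ρ) by field_simp] at hpow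
  calc radialWeight k r ≤ exp (-r ^ 2) * (ρ ^ k * exp (2 * ρ * (r - ρ))) := by
        unfold radialWeight; gcongr
    _ = radialWeight k ρ * exp (-(r - ρ) ^ 2) := by
        have h : exp (-r ^ 2) * exp (2 * ρ * (r - ρ)) = exp (-ρ ^ 2) * exp (-(r - ρ) ^ 2) := by
          rw [← exp_add, ← exp_add]; ring_nf
        unfold radialWeight; linear_combination ρ ^ k * h

lemma radialWeight_mul_exp_neg_three_le (hρ : 0 < ρ) (hk : (k : ℝ) = 2 * ρ ^ 2)
    (hρr : ρ ≤ r) (hr : r ≤ ρ + 1) :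
    radialWeight k ρ * exp (-3) ≤ radialWeight k r := by
  have hr0 : 0 < r := hρ.trans_le hρr
  have hpow := pow_le_pow_mul_exp k hρ.le hr0
  have hexp : 2 * ρ ^ 2 * (ρ / r - 1) ≤ ρ ^ 2 + 3 - r ^ 2 := by
    rw [div_sub_one hr0.ne', mul_div_assoc', div_le_iff₀ hr0]
    nlinarith [mul_nonneg hρ.le (sub_nonneg.2 hρr), mul_nonneg (sub_nonneg.2 hρr) (sub_nonneg.2 hr)]
  rw [hk] at hpow
  calc radialWeight k ρ * exp (-3)
        ≤ exp (-ρ ^ 2) * (r ^ k * exp (ρ ^ 2 + 3 - r ^ 2)) * exp (-3) := by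
        unfold radialWeight; gcongr; exact hpow.trans (by gcongr)
    _ = radialWeight k r := by
        rw [radialWeight, mul_left_comm, mul_assoc, ← exp_add, ← exp_add]
        ring_nf

lemma radialWeight_mul_exp_neg_three_le_integral (hρ : 0 < ρ) (hk : (k : ℝ) = 2 * ρ ^ 2) :
    radialWeight k ρ * exp (-3) ≤ ∫ r in Ioi 0, radialWeight k r := by
  have hsub : Icc ρ (ρ + 1) ⊆ Ioi 0 := fun r hr => hρ.trans_le hr.1
  calc radialWeight k ρ * exp (-3) = ∫ _ in Icc ρ (ρ + 1), radialWeight k ρ * exp (-3) := by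
        simp
    _ ≤ ∫ r in Icc ρ (ρ + 1), radialWeight k r :=
        setIntegral_mono_on (integrableOn_const measure_Icc_lt_top.ne)
          ((integrableOn_radialWeight_Ioi k).mono_set hsub) measurableSet_Icc
          fun r hr => radialWeight_mul_exp_neg_three_le hρ hk hr.1 hr.2
    _ ≤ ∫ r in Ioi 0, radialWeight k r :=
        setIntegral_mono_set (integrableOn_radialWeight_Ioi k)
          ((ae_restrict_iff' measurableSet_Ioi).2
            (.of_forall fun r hr => radialWeight_nonneg (le_of_lt hr)))
          hsub.eventuallyLE

lemma setIntegral_Ioc_radialWeight_le {a s : ℝ} (hρ : 0 < ρ) (hk : (k : ℝ) = 2 * ρ ^ 2)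
    (ha : 0 ≤ a) (hs : 0 ≤ s) (haρ : a ≤ ρ - s) :
    ∫ r in Ioc 0 a, radialWeight k r ≤ a * (radialWeight k ρ * exp (-s ^ 2)) := by
  have hbound : ∀ r ∈ Ioc 0 a, radialWeight k r ≤ radialWeight k ρ * exp (-s ^ 2) := by
    intro r hr
    refine (radialWeight_le_mul_exp_neg_sq hρ hr.1.le hk).trans ?_
    have : s ^ 2 ≤ (r - ρ) ^ 2 := by nlinarith [hr.2]
    exact mul_le_mul_of_nonneg_left (by gcongr) (radialWeight_nonneg hρ.le)
  calc ∫ r in Ioc 0 a, radialWeight k r ≤ ∫ _ in Ioc 0 a, radialWeight k ρ * exp (-s ^ 2) :=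
        setIntegral_mono_on ((integrableOn_radialWeight_Ioi k).mono_set Ioc_subset_Ioi_self)
          (integrableOn_const measure_Ioc_lt_top.ne) measurableSet_Ioc hbound
    _ = a * (radialWeight k ρ * exp (-s ^ 2)) := by simp [ha]

lemma setIntegral_Ioi_radialWeight_le {b s : ℝ} (hρ : 0 < ρ) (hk : (k : ℝ) = 2 * ρ ^ 2)
    (hs : 1 ≤ s) (hbρ : ρ + s ≤ b) :
    ∫ r in Ioi b, radialWeight k r ≤ radialWeight k ρ * exp (-s ^ 2) := by
  set C := radialWeight k ρ * exp (-s ^ 2) * exp b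
  have hbound : ∀ r ∈ Ioi b, radialWeight k r ≤ C * exp (-r) := by
    intro r hr
    have hr : b < r := hr
    refine (radialWeight_le_mul_exp_neg_sq hρ (by linarith) hk).trans ?_
    have : s ^ 2 + (r - b) ≤ (r - ρ) ^ 2 := by nlinarith
    calc radialWeight k ρ * exp (-(r - ρ) ^ 2) ≤ radialWeight k ρ * exp (-s ^ 2 + (b - r)) :=
          mul_le_mul_of_nonneg_left (by gcongr; linarith) (radialWeight_nonneg hρ.le)
      _ = C * exp (-r) := by rw [exp_add, sub_eq_add_neg, exp_add]; ring
  calc ∫ r in Ioi b, radialWeight k r ≤ ∫ r in Ioi b, C * exp (-r) :=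
        setIntegral_mono_on
          ((integrableOn_radialWeight_Ioi k).mono_set (Ioi_subset_Ioi (by linarith)))
          ((integrableOn_exp_neg_Ioi b).const_mul C) measurableSet_Ioi hbound
    _ = radialWeight k ρ * exp (-s ^ 2) := by
        rw [integral_const_mul, integral_exp_neg_Ioi, mul_assoc, ← exp_add]; simp

lemma one_sub_le_setIntegral_Icc_radialWeight_div {a b s : ℝ} (hρ : 0 < ρ)
    (hk : (k : ℝ) = 2 * ρ ^ 2) (ha : 0 ≤ a) (hs : 1 ≤ s) (haρ : a ≤ ρ - s) (hbρ : ρ + s ≤ b) :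
    1 - (a + 1) * exp (3 - s ^ 2) ≤
      (∫ r in Icc a b, radialWeight k r) / ∫ r in Ioi 0, radialWeight k r := by
  have htotal := radialWeight_mul_exp_neg_three_le_integral hρ hk
  have hpos : 0 < ∫ r in Ioi 0, radialWeight k r :=
    (mul_pos (radialWeight_pos hρ) (exp_pos _)).trans_le htotal
  have hsplit := setIntegral_Ioi_eq_Ioc_add_Icc_add_Ioi (integrableOn_radialWeight_Ioi k) ha
    (show a ≤ b by linarith)
  have htails : (∫ r in Ioc 0 a, radialWeight k r) + ∫ r in Ioi b, radialWeight k r ≤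
      (a + 1) * exp (3 - s ^ 2) * ∫ r in Ioi 0, radialWeight k r :=
    calc (∫ r in Ioc 0 a, radialWeight k r) + ∫ r in Ioi b, radialWeight k r
        ≤ a * (radialWeight k ρ * exp (-s ^ 2)) + radialWeight k ρ * exp (-s ^ 2) :=
          add_le_add (setIntegral_Ioc_radialWeight_le hρ hk ha (by linarith) haρ)
            (setIntegral_Ioi_radialWeight_le hρ hk hs hbρ)
      _ = (a + 1) * exp (3 - s ^ 2) * (radialWeight k ρ * exp (-3)) := by
          have h : exp (3 - s ^ 2) * exp (-3) = exp (-s ^ 2) := by rw [← exp_add]; ring_nf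
          linear_combination -(a + 1) * radialWeight k ρ * h
      _ ≤ (a + 1) * exp (3 - s ^ 2) * ∫ r in Ioi 0, radialWeight k r := by gcongr
  rw [le_div_iff₀ hpos]
  linarith

lemma one_sub_le_setIntegral_Icc_radialWeight_div_of_center {μ t : ℝ}
    (hk : (k : ℝ) = 2 * μ ^ 2 - 2) (ht : 3 ≤ t) (htμ : t ≤ μ) :
    1 - (μ + 1) * exp (3 - t) ≤
      (∫ r in Icc (μ - t) (μ + t), radialWeight k r) / ∫ r in Ioi 0, radialWeight k r := by
  set ρ := √(μ ^ 2 - 1)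
  have hρsq : ρ ^ 2 = μ ^ 2 - 1 := sq_sqrt (by nlinarith)
  have hρ : 0 < ρ := sqrt_pos.2 (by nlinarith)
  have hρμ : ρ ≤ μ := by nlinarith
  have hμρ : μ ≤ ρ + 1 := by nlinarith
  refine le_trans ?_ (one_sub_le_setIntegral_Icc_radialWeight_div hρ (by rw [hk, hρsq]; ring)
    (by linarith) (s := t - 1) (by linarith) (by linarith) (by linarith))
  have : t ≤ (t - 1) ^ 2 := by nlinarith
  gcongr <;> linarith

end RadialWeight

lemma eventually_mul_rpow_le_self {α : ℝ} (hα : α < 1) (c : ℝ) :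
    ∀ᶠ x : ℝ in atTop, c * x ^ α ≤ x := by
  filter_upwards [(tendsto_rpow_atTop (sub_pos.2 hα)).eventually_ge_atTop c,
    eventually_gt_atTop 0] with x hc hx
  calc c * x ^ α ≤ x ^ (1 - α) * x ^ α := by gcongr
    _ = x := by rw [← rpow_add hx]; simp

lemma eventually_add_one_mul_exp_sub_rpow_le_rpow_neg {α : ℝ} (hα : 0 < α) (C m : ℝ) :
    ∀ᶠ x : ℝ in atTop, (x + 1) * exp (C - x ^ α) ≤ x ^ (-m) := by
  have hlim : Tendsto (fun x : ℝ => (x ^ α) ^ ((m + 1) / α) * exp (-1 * x ^ α)) atTop (𝓝 0) :=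
    (tendsto_rpow_mul_exp_neg_mul_atTop_nhds_zero _ 1 one_pos).comp (tendsto_rpow_atTop hα)
  filter_upwards [hlim.eventually (ge_mem_nhds (half_pos (exp_pos (-C)))), eventually_ge_atTop 1]
    with x hsmall hx
  have hx0 : 0 < x := by linarith
  rw [← rpow_mul hx0.le, mul_div_cancel₀ _ hα.ne', rpow_add_one hx0.ne'] at hsmall
  rw [rpow_neg hx0.le, ← one_div, le_div_iff₀ (rpow_pos_of_pos hx0 m)]
  calc (x + 1) * exp (C - x ^ α) * x ^ m ≤ 2 * exp C * (x ^ m * x * exp (-1 * x ^ α)) := by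
        rw [sub_eq_add_neg, exp_add, neg_one_mul]
        have : 0 ≤ x ^ m * exp C * exp (-x ^ α) := by positivity
        nlinarith
    _ ≤ 2 * exp C * (exp (-C) / 2) := by gcongr
    _ = 1 := by rw [exp_neg]; field_simp

theorem radial_weight_concentration_general (α : ℝ) (hα0 : 0 < α) (hα1 : α < 1) (m : ℝ) :
    ∃ N₀ : ℕ, ∀ N : ℕ, N₀ ≤ N → 2 ≤ N →
      1 - (N : ℝ) ^ (-m) ≤
          (∫ r in Set.Icc ((N : ℝ) / Real.sqrt 2 - (N : ℝ) ^ α)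
              ((N : ℝ) / Real.sqrt 2 + (N : ℝ) ^ α), Real.exp (-r ^ 2) * r ^ (N ^ 2 - 2)) /
            (∫ r in Set.Ioi (0 : ℝ), Real.exp (-r ^ 2) * r ^ (N ^ 2 - 2)) ∧
        (∫ r in Set.Icc ((N : ℝ) / Real.sqrt 2 - (N : ℝ) ^ α)
              ((N : ℝ) / Real.sqrt 2 + (N : ℝ) ^ α), Real.exp (-r ^ 2) * r ^ (N ^ 2 - 2)) /
            (∫ r in Set.Ioi (0 : ℝ), Real.exp (-r ^ 2) * r ^ (N ^ 2 - 2)) ≤ 1 := by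
  have hev : ∀ᶠ x : ℝ in atTop,
      3 ≤ x ^ α ∧ √2 * x ^ α ≤ x ∧ (x + 1) * exp (3 - x ^ α) ≤ x ^ (-m) :=
    ((tendsto_rpow_atTop hα0).eventually_ge_atTop 3).and ((eventually_mul_rpow_le_self hα1 √2).and
      (eventually_add_one_mul_exp_sub_rpow_le_rpow_neg hα0 3 m))
  obtain ⟨N₀, hN₀⟩ := eventually_atTop.1 (tendsto_natCast_atTop_atTop.eventually hev)
  refine ⟨N₀, fun N hN hN2 => ?_⟩
  obtain ⟨ht, hwidth, hε⟩ := hN₀ N hN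
  have hk : ((N ^ 2 - 2 : ℕ) : ℝ) = 2 * ((N : ℝ) / √2) ^ 2 - 2 := by
    rw [div_pow, sq_sqrt zero_le_two, Nat.cast_sub (by nlinarith), Nat.cast_pow]; ring
  have htμ : (N : ℝ) ^ α ≤ N / √2 := by rwa [le_div_iff₀ (by positivity), mul_comm]
  have hμ : (N : ℝ) / √2 ≤ N := div_le_self N.cast_nonneg one_lt_sqrt_two.le
  refine ⟨?_, setIntegral_Icc_div_setIntegral_Ioi_le_one (integrableOn_radialWeight_Ioi _)
    (fun r hr => radialWeight_nonneg (le_of_lt hr)) (by linarith)⟩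
  calc 1 - (N : ℝ) ^ (-m) ≤ 1 - ((N : ℝ) / √2 + 1) * exp (3 - (N : ℝ) ^ α) := by
        gcongr; exact le_trans (by gcongr) hε
    _ ≤ _ := one_sub_le_setIntegral_Icc_radialWeight_div_of_center hk ht htμ

/-- **Concentration of the radial weight** `e^{-r²} r^{N²-2}` around `r = N/√2`. -/
theorem radial_weight_concentration (α : ℝ) (hα0 : 0 < α) (hα1 : α < 1) (m : ℝ) (hm : 0 < m) :
    ∃ N₀ : ℕ, ∀ N : ℕ, N₀ ≤ N → 2 ≤ N →
      1 - (N : ℝ) ^ (-m) ≤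
          (∫ r in Set.Icc ((N : ℝ) / Real.sqrt 2 - (N : ℝ) ^ α)
              ((N : ℝ) / Real.sqrt 2 + (N : ℝ) ^ α), Real.exp (-r ^ 2) * r ^ (N ^ 2 - 2)) /
            (∫ r in Set.Ioi (0 : ℝ), Real.exp (-r ^ 2) * r ^ (N ^ 2 - 2)) ∧
        (∫ r in Set.Icc ((N : ℝ) / Real.sqrt 2 - (N : ℝ) ^ α)
              ((N : ℝ) / Real.sqrt 2 + (N : ℝ) ^ α), Real.exp (-r ^ 2) * r ^ (N ^ 2 - 2)) /
            (∫ r in Set.Ioi (0 : ℝ), Real.exp (-r ^ 2) * r ^ (N ^ 2 - 2)) ≤ 1 :=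
  radial_weight_concentration_general α hα0 hα1 m
end
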